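/- For all ζ, ζ_*, ζ', ζ'_* ∈ 𝓔 and all ω ∈ S²: (i) if (v,v_*) ∈ E[ζ,ζ_*,ζ',ζ'_*] with v ≠ v_*, then S_ω[ζ,ζ_*,ζ',ζ'_*](v,v_*) ∈ E[ζ',ζ'_*,ζ,ζ_*]; (ii) writing F[ζ,ζ_*,ζ',ζ'_*] := {(v,v_*) ∈ ℝ³×ℝ³ : Δ(v,v_*,ζ,ζ_*,ζ',ζ'_*) > 0 and v ≠ v_*}, the map S_ω[ζ,ζ_*,ζ',ζ'_*] maps F[ζ,ζ_*,ζ',ζ'_*] bijectively onto F[ζ',ζ'_*,ζ,ζ_*], and its inverse is S_ω[ζ',ζ'_*,ζ,ζ_*]. -/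

import Mathlib

/-!
Write `d = v - v⋆` and `c` for the energy gap, so that `Δ = |d|²/4 + c`. The map keeps `v + v⋆` and
replaces `d` by `2√Δ · T(d/|d|)`; hence the image has discriminant `|d|²/4 > 0` for the gap `-c`.
Applying the map for `-c` then replaces the relative velocity by `|d| · T(T(d/|d|)) = d`, and so
returns `(v, v⋆)`. Of `T` the argument needs only that it is a norm-preserving involution, as the
reflection `T_ω` in `ω^⊥` is.
-/

open MeasureTheory Real

noncomputable section

/-- ℝ³ with its Euclidean structure. -/
abbrev V3 := EuclideanSpace ℝ (Fin 3)

/-- `T_ω[V] = V - 2 (ω ⬝ V) ω`, the reflection with respect to `(ℝω)^⊥`. -/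
def Tmap (ω V : V3) : V3 := V - (2 * (inner ℝ ω V : ℝ)) • ω

/-- `Δ(v, v⋆, ζ, ζ⋆, ζ', ζ'⋆) = ¼|v − v⋆|² + (1/m)(ε(ζ) + ε(ζ⋆) − ε(ζ') − ε(ζ'⋆))`. -/
def Δcol (m : ℝ) {𝓔 : Type*} (ε : 𝓔 → ℝ) (v vs : V3) (z zs z' zs' : 𝓔) : ℝ :=
  (1 / 4) * ‖v - vs‖ ^ 2 + (1 / m) * (ε z + ε zs - ε z' - ε zs')

/-- `E[ζ,ζ⋆,ζ',ζ'⋆]`, the set of pre-collision velocity pairs making the collision possible. -/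
def Ecol (m : ℝ) {𝓔 : Type*} (ε : 𝓔 → ℝ) (z zs z' zs' : 𝓔) : Set (V3 × V3) :=
  {p | 0 ≤ Δcol m ε p.1 p.2 z zs z' zs'}

/-- `F[ζ,ζ⋆,ζ',ζ'⋆] = {(v,v⋆) : Δ > 0 and v ≠ v⋆}`. -/
def Fcol (m : ℝ) {𝓔 : Type*} (ε : 𝓔 → ℝ) (z zs z' zs' : 𝓔) : Set (V3 × V3) :=
  {p | 0 < Δcol m ε p.1 p.2 z zs z' zs' ∧ p.1 ≠ p.2}

/-- The collision transformation `S_ω[ζ,ζ⋆,ζ',ζ'⋆] (v, v⋆) = (v', v'⋆)`. -/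
def Scol (m : ℝ) {𝓔 : Type*} (ε : 𝓔 → ℝ) (z zs z' zs' : 𝓔) (ω : V3) (p : V3 × V3) :
    V3 × V3 :=
  ((1 / 2 : ℝ) • (p.1 + p.2) +
      Real.sqrt (Δcol m ε p.1 p.2 z zs z' zs') • Tmap ω (‖p.1 - p.2‖⁻¹ • (p.1 - p.2)),
    (1 / 2 : ℝ) • (p.1 + p.2) -
      Real.sqrt (Δcol m ε p.1 p.2 z zs z' zs') • Tmap ω (‖p.1 - p.2‖⁻¹ • (p.1 - p.2)))

section CollisionMap

variable {E : Type*} [NormedAddCommGroup E] [NormedSpace ℝ E]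

def collisionDiscr (c : ℝ) (p : E × E) : ℝ := (1 / 4) * ‖p.1 - p.2‖ ^ 2 + c

def collisionDomain (c : ℝ) : Set (E × E) := {p | 0 < collisionDiscr c p ∧ p.1 ≠ p.2}

def collisionMap (T : E → E) (c : ℝ) (p : E × E) : E × E :=
  ((1 / 2 : ℝ) • (p.1 + p.2) + √(collisionDiscr c p) • T (‖p.1 - p.2‖⁻¹ • (p.1 - p.2)),
    (1 / 2 : ℝ) • (p.1 + p.2) - √(collisionDiscr c p) • T (‖p.1 - p.2‖⁻¹ • (p.1 - p.2)))

variable {T : E → E} {c : ℝ} {p : E × E}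

theorem collisionMap_fst_add_snd (T : E → E) (c : ℝ) (p : E × E) :
    (collisionMap T c p).1 + (collisionMap T c p).2 = p.1 + p.2 := by
  simp only [collisionMap]; module

theorem collisionMap_fst_sub_snd (T : E → E) (c : ℝ) (p : E × E) :
    (collisionMap T c p).1 - (collisionMap T c p).2 =
      (2 * √(collisionDiscr c p)) • T (‖p.1 - p.2‖⁻¹ • (p.1 - p.2)) := by
  simp only [collisionMap]; module

theorem norm_collisionMap_fst_sub_snd (hT : ∀ x, ‖T x‖ = ‖x‖) (hp : p.1 ≠ p.2) :
    ‖(collisionMap T c p).1 - (collisionMap T c p).2‖ = 2 * √(collisionDiscr c p) := by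
  have hd : ‖p.1 - p.2‖ ≠ 0 := norm_ne_zero_iff.mpr (sub_ne_zero.mpr hp)
  rw [collisionMap_fst_sub_snd, norm_smul, hT, norm_smul, norm_inv, norm_norm,
    inv_mul_cancel₀ hd, mul_one, Real.norm_of_nonneg (by positivity)]

theorem collisionDiscr_neg_collisionMap (hT : ∀ x, ‖T x‖ = ‖x‖) (hc : 0 ≤ collisionDiscr c p)
    (hp : p.1 ≠ p.2) :
    collisionDiscr (-c) (collisionMap T c p) = (1 / 4) * ‖p.1 - p.2‖ ^ 2 := by
  rw [collisionDiscr, norm_collisionMap_fst_sub_snd hT hp, mul_pow, Real.sq_sqrt hc,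
    collisionDiscr]
  ring

theorem mapsTo_collisionMap (hT : ∀ x, ‖T x‖ = ‖x‖) :
    Set.MapsTo (collisionMap T c) (collisionDomain c) (collisionDomain (-c)) := by
  rintro p ⟨hc, hp⟩
  refine ⟨?_, fun h ↦ ?_⟩
  · rw [collisionDiscr_neg_collisionMap hT hc.le hp]
    have := norm_pos_iff.mpr (sub_ne_zero.mpr hp)
    positivity
  · have := norm_collisionMap_fst_sub_snd (c := c) hT hp
    rw [h, sub_self, norm_zero] at this
    linarith [Real.sqrt_pos.mpr hc]

theorem collisionMap_neg_collisionMap (hT : ∀ x, ‖T x‖ = ‖x‖) (hTT : Function.Involutive T)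
    (hp : p ∈ collisionDomain c) : collisionMap T (-c) (collisionMap T c p) = p := by
  obtain ⟨hc, hne⟩ := hp
  set d := p.1 - p.2
  have hd : 0 < ‖d‖ := norm_pos_iff.mpr (sub_ne_zero.mpr hne)
  have hsqrt : √(collisionDiscr (-c) (collisionMap T c p)) = ‖d‖ / 2 := by
    rw [collisionDiscr_neg_collisionMap hT hc.le hne,
      show (1 / 4 : ℝ) * ‖d‖ ^ 2 = (‖d‖ / 2) ^ 2 by ring]
    exact Real.sqrt_sq (by positivity)
  have hdir : ‖(collisionMap T c p).1 - (collisionMap T c p).2‖⁻¹ •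
      ((collisionMap T c p).1 - (collisionMap T c p).2) = T (‖d‖⁻¹ • d) := by
    rw [norm_collisionMap_fst_sub_snd hT hne, collisionMap_fst_sub_snd, smul_smul,
      inv_mul_cancel₀ (by positivity [Real.sqrt_pos.mpr hc]), one_smul]
  have hhalf : (‖d‖ / 2) • (‖d‖⁻¹ • d) = (1 / 2 : ℝ) • d := by
    rw [smul_smul]
    congr 1
    field_simp
  rw [collisionMap, hsqrt, hdir, hTT, collisionMap_fst_add_snd, hhalf]
  exact Prod.ext (by module) (by module)

theorem invOn_collisionMap (hT : ∀ x, ‖T x‖ = ‖x‖) (hTT : Function.Involutive T) :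
    Set.InvOn (collisionMap T (-c)) (collisionMap T c) (collisionDomain c)
      (collisionDomain (-c)) := by
  refine ⟨fun p hp ↦ collisionMap_neg_collisionMap hT hTT hp, fun p hp ↦ ?_⟩
  simpa only [neg_neg] using collisionMap_neg_collisionMap (c := -c) hT hTT hp

theorem bijOn_collisionMap (hT : ∀ x, ‖T x‖ = ‖x‖) (hTT : Function.Involutive T) :
    Set.BijOn (collisionMap T c) (collisionDomain c) (collisionDomain (-c)) := by
  refine (invOn_collisionMap hT hTT).bijOn (mapsTo_collisionMap hT) ?_
  simpa only [neg_neg] using mapsTo_collisionMap (c := -c) hT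

end CollisionMap

theorem Tmap_eq_reflection {ω : V3} (hω : ‖ω‖ = 1) : Tmap ω = (ℝ ∙ ω)ᗮ.reflection := by
  ext1 V
  rw [Submodule.reflection_orthogonal_apply, Submodule.reflection_singleton_apply, hω, Tmap]
  module

theorem norm_Tmap {ω : V3} (hω : ‖ω‖ = 1) (V : V3) : ‖Tmap ω V‖ = ‖V‖ := by
  rw [Tmap_eq_reflection hω, LinearIsometryEquiv.norm_map]

theorem Tmap_involutive {ω : V3} (hω : ‖ω‖ = 1) : Function.Involutive (Tmap ω) := by
  rw [Tmap_eq_reflection hω]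
  exact Submodule.reflection_involutive _

def energyGap (m : ℝ) {𝓔 : Type*} (ε : 𝓔 → ℝ) (z zs z' zs' : 𝓔) : ℝ :=
  (1 / m) * (ε z + ε zs - ε z' - ε zs')

theorem energyGap_swap (m : ℝ) {𝓔 : Type*} (ε : 𝓔 → ℝ) (z zs z' zs' : 𝓔) :
    energyGap m ε z' zs' z zs = -energyGap m ε z zs z' zs' := by
  unfold energyGap; ring

section

variable (m : ℝ) {𝓔 : Type*} (ε : 𝓔 → ℝ) (z zs z' zs' : 𝓔)

theorem Δcol_eq_collisionDiscr (p : V3 × V3) :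
    Δcol m ε p.1 p.2 z zs z' zs' = collisionDiscr (energyGap m ε z zs z' zs') p := rfl

theorem Fcol_eq_collisionDomain :
    Fcol m ε z zs z' zs' = collisionDomain (energyGap m ε z zs z' zs') := rfl

theorem Scol_eq_collisionMap (ω : V3) :
    Scol m ε z zs z' zs' ω = collisionMap (Tmap ω) (energyGap m ε z zs z' zs') := rfl

end

theorem collision_map_bijection_general
    {𝓔 : Type*} (m : ℝ) (ε : 𝓔 → ℝ)
    (z zs z' zs' : 𝓔) (ω : V3) (hω : ‖ω‖ = 1) :
    (∀ p ∈ Ecol m ε z zs z' zs', p.1 ≠ p.2 →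
        Scol m ε z zs z' zs' ω p ∈ Ecol m ε z' zs' z zs) ∧
    Set.BijOn (Scol m ε z zs z' zs' ω) (Fcol m ε z zs z' zs') (Fcol m ε z' zs' z zs) ∧
    Set.InvOn (Scol m ε z' zs' z zs ω) (Scol m ε z zs z' zs' ω)
      (Fcol m ε z zs z' zs') (Fcol m ε z' zs' z zs) := by
  simp only [Ecol, Set.mem_ofPred_eq, Δcol_eq_collisionDiscr, Fcol_eq_collisionDomain,
    Scol_eq_collisionMap, energyGap_swap m ε z zs z' zs']
  refine ⟨fun p hp hne ↦ ?_, bijOn_collisionMap (norm_Tmap hω) (Tmap_involutive hω),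
    invOn_collisionMap (norm_Tmap hω) (Tmap_involutive hω)⟩
  rw [collisionDiscr_neg_collisionMap (norm_Tmap hω) hp hne]
  positivity

/-- **Lemma 1 (the collision transformation is a well-defined bijection).**
(i) If `(v,v⋆) ∈ E[ζ,ζ⋆,ζ',ζ'⋆]` with `v ≠ v⋆`, then
`S_ω[ζ,ζ⋆,ζ',ζ'⋆](v,v⋆) ∈ E[ζ',ζ'⋆,ζ,ζ⋆]`; (ii) `S_ω[ζ,ζ⋆,ζ',ζ'⋆]` maps
`F[ζ,ζ⋆,ζ',ζ'⋆]` bijectively onto `F[ζ',ζ'⋆,ζ,ζ⋆]` and its inverse on these sets is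
`S_ω[ζ',ζ'⋆,ζ,ζ⋆]`. -/
theorem collision_map_bijection
    {𝓔 : Type*} [MeasurableSpace 𝓔] (μ : Measure 𝓔) (hμ : μ Set.univ ≠ 0)
    (m : ℝ) (hm : 0 < m) (ε : 𝓔 → ℝ) (hε : Measurable ε)
    (z zs z' zs' : 𝓔) (ω : V3) (hω : ‖ω‖ = 1) :
    (∀ p ∈ Ecol m ε z zs z' zs', p.1 ≠ p.2 →
        Scol m ε z zs z' zs' ω p ∈ Ecol m ε z' zs' z zs) ∧
    Set.BijOn (Scol m ε z zs z' zs' ω) (Fcol m ε z zs z' zs') (Fcol m ε z' zs' z zs) ∧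
    Set.InvOn (Scol m ε z' zs' z zs ω) (Scol m ε z zs z' zs' ω)
      (Fcol m ε z zs z' zs') (Fcol m ε z' zs' z zs) :=
  collision_map_bijection_general m ε z zs z' zs' ω hω

end
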